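/- arXiv:2302.07533 — 2 statements merged into one kernel-verified Lean document; each statement's English description precedes it below -/
import Mathlib

section
/- Let X_1, …, X_N be i.i.d. real-valued random variables with mean μ and variance σ². For b = 1, …, B, let the b-th traditional bootstrap resample be X_i^{(b)} = X_{I_{i,b}} for i = 1, …, N, where the indices I_{i,b} are i.i.d. uniform on {1, …, N} and independent of the data. Let X̄^{(b)} = N⁻¹∑_{i=1}^N X_i^{(b)} and ŜE²_TB = B⁻¹∑_{b=1}^B (X̄^{(b)} − X̄)². Then E(ŜE²_TB) = (σ²/N)(1 − 1/N) exactly, for every N ≥ 1 and B ≥ 1. -/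
/-!
Write `D j = X j - X̄`. The `b`-th resample mean deviates from `X̄` by `N⁻¹ ∑ᵢ D (I (b, i))`.
Since the indices are independent of the data, the expectation of `D (I p) * D (I p')` is the
average of `E [D j * D j']` over the law of the pair of indices. For `p = p'` this is
`N⁻¹ E [∑ⱼ D j ^ 2] = N⁻¹ (N - 1) σ²` (the sample variance is unbiased); for `p ≠ p'` the pair
is uniform on the square, so one gets `N⁻² E [(∑ⱼ D j) ^ 2] = 0`. Summing the `N` diagonal terms
gives `E [(X̄⁽ᵇ⁾ - X̄) ^ 2] = N⁻² · N · N⁻¹ (N - 1) σ²` for every `b`.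
-/

open MeasureTheory ProbabilityTheory Finset

lemma sum_sq_sub_average {ι : Type*} {s : Finset ι} (hs : s.Nonempty) (y : ι → ℝ) :
    ∑ i ∈ s, (y i - (∑ j ∈ s, y j) / #s) ^ 2 = ∑ i ∈ s, y i ^ 2 - (∑ i ∈ s, y i) ^ 2 / #s := by
  have hcard : (#s : ℝ) ≠ 0 := by exact_mod_cast hs.card_ne_zero
  simp only [sub_sq, sum_add_distrib, sum_sub_distrib, ← sum_mul, ← mul_sum, sum_const,
    nsmul_eq_mul]
  field_simp
  ring

section RandomIndex

variable {Ω κ : Type*} {m mΩ : MeasurableSpace Ω} {μ : Measure Ω} {K : Ω → κ} {s : Finset κ}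
  {Y : κ → Ω → ℝ}

lemma eval_ae_eq_sum_indicator (hKs : ∀ᵐ ω ∂μ, K ω ∈ s) :
    (fun ω ↦ Y (K ω) ω) =ᵐ[μ] fun ω ↦ ∑ k ∈ s, (K ⁻¹' {k}).indicator (Y k) ω := by
  filter_upwards [hKs] with ω hω
  rw [sum_eq_single_of_mem _ hω fun k _ hk ↦
    Set.indicator_of_notMem (fun h ↦ hk h.symm) _]
  simp

variable [MeasurableSpace κ] [MeasurableSingletonClass κ]

lemma memLp_eval {p : ENNReal} (hK : Measurable K) (hKs : ∀ᵐ ω ∂μ, K ω ∈ s)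
    (hY : ∀ k ∈ s, MemLp (Y k) p μ) : MemLp (fun ω ↦ Y (K ω) ω) p μ :=
  (memLp_finsetSum s fun k hk ↦ (hY k hk).indicator (hK (measurableSet_singleton k))).ae_eq
    (eval_ae_eq_sum_indicator hKs).symm

lemma integral_eval_of_indep (hm : m ≤ mΩ) (hK : Measurable K)
    (hKs : ∀ᵐ ω ∂μ, K ω ∈ s) (hKm : Indep m (MeasurableSpace.comap K inferInstance) μ)
    (hYm : ∀ k ∈ s, Measurable[m] (Y k)) (hY : ∀ k ∈ s, Integrable (Y k) μ) :
    ∫ ω, Y (K ω) ω ∂μ = ∑ k ∈ s, μ.real (K ⁻¹' {k}) * ∫ ω, Y k ω ∂μ := by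
  rw [integral_congr_ae (eval_ae_eq_sum_indicator hKs), integral_finsetSum s fun k hk ↦
    (hY k hk).indicator (hK (measurableSet_singleton k))]
  refine sum_congr rfl fun k hk ↦ ?_
  rw [integral_indicator (hK (measurableSet_singleton k))]
  have hind : Indep (MeasurableSpace.comap K inferInstance)
      (MeasurableSpace.comap (Y k) inferInstance) μ :=
    indep_of_indep_of_le_right hKm.symm (hYm k hk).comap_le
  exact hind.setIntegral_eq_mul (f := id) hK.comap_le ((hYm k hk).mono hm le_rfl).aemeasurable
    ⟨{k}, measurableSet_singleton k, rfl⟩ aestronglyMeasurable_id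

end RandomIndex

section SampleVariance

variable {Ω : Type*} {mΩ : MeasurableSpace Ω} {μ : Measure Ω} [IsProbabilityMeasure μ]

lemma integral_sq_sum_of_pairwise_indep {ι : Type*} {W : ι → Ω → ℝ} {s : Finset ι}
    (hW : ∀ i ∈ s, MemLp (W i) 2 μ) (hW0 : ∀ i ∈ s, μ[W i] = 0)
    (hind : Set.Pairwise s fun i j ↦ W i ⟂ᵢ[μ] W j) :
    ∫ ω, (∑ i ∈ s, W i ω) ^ 2 ∂μ = ∑ i ∈ s, ∫ ω, W i ω ^ 2 ∂μ := by
  have hsum : μ[∑ i ∈ s, W i] = 0 := by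
    simp only [Finset.sum_apply]
    rw [integral_finsetSum s fun i hi ↦ (hW i hi).integrable one_le_two]
    exact sum_eq_zero hW0
  have hvar := IndepFun.variance_sum hW hind
  rw [variance_of_integral_eq_zero (memLp_finsetSum' s hW).aemeasurable hsum,
    sum_congr rfl fun i hi ↦ variance_of_integral_eq_zero (hW i hi).aemeasurable (hW0 i hi)]
    at hvar
  simpa only [Finset.sum_apply] using hvar

noncomputable def sampleMean (X : ℕ → Ω → ℝ) (N : ℕ) (ω : Ω) : ℝ := (∑ j ∈ range N, X j ω) / N

theorem integral_sum_sq_sub_sampleMean {X : ℕ → Ω → ℝ} {N : ℕ} (hN : N ≠ 0) {a v : ℝ}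
    (hX : ∀ j, MemLp (X j) 2 μ) (hmean : ∀ j, μ[X j] = a)
    (hvar : ∀ j, ∫ ω, (X j ω - a) ^ 2 ∂μ = v) (hind : Pairwise fun i j ↦ X i ⟂ᵢ[μ] X j) :
    ∫ ω, ∑ j ∈ range N, (X j ω - sampleMean X N ω) ^ 2 ∂μ = (N - 1) * v := by
  have hW : ∀ j, MemLp (fun ω ↦ X j ω - a) 2 μ := fun j ↦ (hX j).sub (memLp_const a)
  have hW0 : ∀ j, μ[fun ω ↦ X j ω - a] = 0 := fun j ↦ by
    rw [integral_sub ((hX j).integrable one_le_two) (integrable_const a), hmean j]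
    simp
  have hWind : Set.Pairwise (range N : Set ℕ) fun i j ↦
      (fun ω ↦ X i ω - a) ⟂ᵢ[μ] (fun ω ↦ X j ω - a) := fun i _ j _ hij ↦
    (hind hij).comp (measurable_id.sub_const a) (measurable_id.sub_const a)
  have hsquares := integral_sq_sum_of_pairwise_indep (fun j _ ↦ hW j) (fun j _ ↦ hW0 j) hWind
  have hcentre : ∀ ω, ∑ j ∈ range N, (X j ω - sampleMean X N ω) ^ 2 =
      ∑ j ∈ range N, (X j ω - a) ^ 2 - (∑ j ∈ range N, (X j ω - a)) ^ 2 / N := fun ω ↦ by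
    have hN' : (N : ℝ) ≠ 0 := by exact_mod_cast hN
    have hdev : ∀ j, X j ω - sampleMean X N ω =
        (X j ω - a) - (∑ k ∈ range N, (X k ω - a)) / #(range N) := fun j ↦ by
      simp only [sampleMean, sum_sub_distrib, sum_const, card_range, nsmul_eq_mul]
      field_simp
      ring
    rw [sum_congr rfl fun j _ ↦ by rw [hdev j],
      sum_sq_sub_average (nonempty_range_iff.2 hN) fun j ↦ X j ω - a, card_range]
  simp only [hcentre]
  rw [integral_sub (integrable_finsetSum _ fun j _ ↦ (hW j).integrable_sq)
      (((memLp_finsetSum _ fun j _ ↦ hW j).integrable_sq).div_const _),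
    integral_finsetSum _ fun j _ ↦ (hW j).integrable_sq, integral_div, hsquares]
  simp only [hvar, sum_const, card_range, nsmul_eq_mul]
  field_simp

end SampleVariance

section Resampling

variable {Ω ι : Type*} {m mΩ : MeasurableSpace Ω} {μ : Measure Ω} [IsProbabilityMeasure μ]
  {N : ℕ} {J : ι → Ω → ℕ}

lemma ae_mem_range_of_uniform (hN : N ≠ 0) {K : Ω → ℕ} (hK : Measurable K)
    (hunif : ∀ j < N, μ (K ⁻¹' {j}) = (N : ENNReal)⁻¹) : ∀ᵐ ω ∂μ, K ω ∈ range N := by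
  have hrange : μ (K ⁻¹' ↑(range N)) = μ Set.univ := by
    rw [← sum_measure_preimage_singleton _ fun j _ ↦ hK (measurableSet_singleton j),
      sum_congr rfl fun j hj ↦ hunif j (mem_range.1 hj), sum_const, card_range, nsmul_eq_mul,
      ENNReal.mul_inv_cancel (by exact_mod_cast hN) (ENNReal.natCast_ne_top N), measure_univ]
  exact (ae_mem_iff_measure_eq (hK (range N).measurableSet).nullMeasurableSet).2 hrange

variable {Y : ℕ → Ω → ℝ}

lemma memLp_eval_of_uniform {p : ENNReal} (hY : ∀ j, MemLp (Y j) p μ) (hN : N ≠ 0) {K : Ω → ℕ}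
    (hK : Measurable K) (hunif : ∀ j < N, μ (K ⁻¹' {j}) = (N : ENNReal)⁻¹) :
    MemLp (fun ω ↦ Y (K ω) ω) p μ :=
  memLp_eval hK (ae_mem_range_of_uniform hN hK hunif) fun j _ ↦ hY j

lemma integral_sq_eval_of_uniform (hm : m ≤ mΩ) (hYm : ∀ j, Measurable[m] (Y j))
    (hY : ∀ j, MemLp (Y j) 2 μ) (hN : N ≠ 0) {K : Ω → ℕ} (hK : Measurable K)
    (hunif : ∀ j < N, μ (K ⁻¹' {j}) = (N : ENNReal)⁻¹)
    (hKY : Indep m (MeasurableSpace.comap K inferInstance) μ) :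
    ∫ ω, Y (K ω) ω ^ 2 ∂μ = (N : ℝ)⁻¹ * ∫ ω, ∑ j ∈ range N, Y j ω ^ 2 ∂μ := by
  rw [integral_eval_of_indep (Y := fun j ω ↦ Y j ω ^ 2) hm hK
      (ae_mem_range_of_uniform hN hK hunif) hKY (fun j _ ↦ (hYm j).pow_const 2)
      (fun j _ ↦ (hY j).integrable_sq),
    integral_finsetSum _ fun j _ ↦ (hY j).integrable_sq, mul_sum]
  refine sum_congr rfl fun j hj ↦ ?_
  rw [measureReal_def, hunif j (mem_range.1 hj), ENNReal.toReal_inv, ENNReal.toReal_natCast]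

lemma integral_mul_eval_of_uniform_of_indepFun (hm : m ≤ mΩ) (hYm : ∀ j, Measurable[m] (Y j))
    (hY : ∀ j, MemLp (Y j) 2 μ) (hYsum : ∀ ω, ∑ j ∈ range N, Y j ω = 0) (hN : N ≠ 0)
    {K K' : Ω → ℕ} (hK : Measurable K) (hK' : Measurable K')
    (hunif : ∀ j < N, μ (K ⁻¹' {j}) = (N : ENNReal)⁻¹)
    (hunif' : ∀ j < N, μ (K' ⁻¹' {j}) = (N : ENNReal)⁻¹) (hKK' : K ⟂ᵢ[μ] K')
    (hKY : Indep m (MeasurableSpace.comap (fun ω ↦ (K ω, K' ω)) inferInstance) μ) :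
    ∫ ω, Y (K ω) ω * Y (K' ω) ω ∂μ = 0 := by
  have hKs : ∀ᵐ ω ∂μ, (K ω, K' ω) ∈ range N ×ˢ range N := by
    filter_upwards [ae_mem_range_of_uniform hN hK hunif, ae_mem_range_of_uniform hN hK' hunif']
      with ω hω hω' using mem_product.2 ⟨hω, hω'⟩
  have hweight : ∀ q ∈ range N ×ˢ range N,
      μ.real ((fun ω ↦ (K ω, K' ω)) ⁻¹' {q}) = (N : ℝ)⁻¹ * (N : ℝ)⁻¹ := fun q hq ↦ by
    obtain ⟨hq1, hq2⟩ := mem_product.1 hq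
    have hpre : (fun ω ↦ (K ω, K' ω)) ⁻¹' {q} = K ⁻¹' {q.1} ∩ K' ⁻¹' {q.2} := by
      ext ω
      simp [Prod.ext_iff]
    rw [measureReal_def, hpre, hKK'.measure_inter_preimage_eq_mul _ _ (measurableSet_singleton _)
      (measurableSet_singleton _), hunif _ (mem_range.1 hq1), hunif' _ (mem_range.1 hq2),
      ENNReal.toReal_mul, ENNReal.toReal_inv, ENNReal.toReal_natCast]
  have hYY : ∀ q : ℕ × ℕ, Integrable (fun ω ↦ Y q.1 ω * Y q.2 ω) μ :=
    fun q ↦ (hY q.1).integrable_mul (hY q.2)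
  rw [integral_eval_of_indep (Y := fun q ω ↦ Y q.1 ω * Y q.2 ω) hm (hK.prodMk hK') hKs hKY
      (fun q _ ↦ (hYm q.1).mul (hYm q.2)) (fun q _ ↦ hYY q),
    sum_congr rfl fun q hq ↦ by rw [hweight q hq], ← mul_sum,
    ← integral_finsetSum _ fun q _ ↦ hYY q]
  simp [sum_product, ← sum_mul_sum, hYsum]

theorem integral_sq_sum_eval_resample (hm : m ≤ mΩ) (hYm : ∀ j, Measurable[m] (Y j))
    (hY : ∀ j, MemLp (Y j) 2 μ) (hYsum : ∀ ω, ∑ j ∈ range N, Y j ω = 0) (hN : N ≠ 0)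
    (hJ : ∀ i, Measurable (J i)) (hunif : ∀ i, ∀ j < N, μ (J i ⁻¹' {j}) = (N : ENNReal)⁻¹)
    (hJindep : Pairwise fun i i' ↦ J i ⟂ᵢ[μ] J i')
    (hJY : Indep m (⨆ i, MeasurableSpace.comap (J i) inferInstance) μ) (t : Finset ι) :
    ∫ ω, (∑ i ∈ t, Y (J i ω) ω) ^ 2 ∂μ =
      #t * ((N : ℝ)⁻¹ * ∫ ω, ∑ j ∈ range N, Y j ω ^ 2 ∂μ) := by
  have hJsup : ∀ i, Measurable[⨆ i, MeasurableSpace.comap (J i) inferInstance] (J i) :=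
    fun i ↦ Measurable.of_comap_le (le_iSup (fun i ↦ MeasurableSpace.comap (J i) inferInstance) i)
  have hJY' : ∀ i, Indep m (MeasurableSpace.comap (J i) inferInstance) μ :=
    fun i ↦ indep_of_indep_of_le_right hJY (hJsup i).comap_le
  have hL2 : ∀ i, MemLp (fun ω ↦ Y (J i ω) ω) 2 μ :=
    fun i ↦ memLp_eval_of_uniform hY hN (hJ i) (hunif i)
  have hprod : ∀ i i', Integrable (fun ω ↦ Y (J i ω) ω * Y (J i' ω) ω) μ :=
    fun i i' ↦ (hL2 i).integrable_mul (hL2 i')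
  have hdiag : ∀ i, ∫ ω, Y (J i ω) ω * Y (J i ω) ω ∂μ =
      (N : ℝ)⁻¹ * ∫ ω, ∑ j ∈ range N, Y j ω ^ 2 ∂μ := fun i ↦ by
    simp_rw [← sq]
    exact integral_sq_eval_of_uniform hm hYm hY hN (hJ i) (hunif i) (hJY' i)
  have hoff : ∀ i i', i ≠ i' → ∫ ω, Y (J i ω) ω * Y (J i' ω) ω ∂μ = 0 := fun i i' hii' ↦
    integral_mul_eval_of_uniform_of_indepFun hm hYm hY hYsum hN (hJ i) (hJ i') (hunif i)
      (hunif i') (hJindep hii')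
      (indep_of_indep_of_le_right hJY ((hJsup i).prodMk (hJsup i')).comap_le)
  have hrow : ∀ i ∈ t, ∫ ω, ∑ i' ∈ t, Y (J i ω) ω * Y (J i' ω) ω ∂μ =
      (N : ℝ)⁻¹ * ∫ ω, ∑ j ∈ range N, Y j ω ^ 2 ∂μ := fun i hi ↦ by
    rw [integral_finsetSum _ fun i' _ ↦ hprod i i',
      sum_eq_single_of_mem i hi fun i' _ hi' ↦ hoff i i' hi'.symm, hdiag]
  simp_rw [sq (∑ i ∈ t, _), sum_mul_sum]
  rw [integral_finsetSum _ fun i _ ↦ integrable_finsetSum _ fun i' _ ↦ hprod i i',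
    sum_congr rfl hrow, sum_const, nsmul_eq_mul]

end Resampling

section Bootstrap

variable {Ω : Type*} {m mΩ : MeasurableSpace Ω} {μ : Measure Ω} [IsProbabilityMeasure μ]
  {N : ℕ} {X : ℕ → Ω → ℝ} {J : ℕ → Ω → ℕ}

noncomputable def resampleMean (X : ℕ → Ω → ℝ) (J : ℕ → Ω → ℕ) (N : ℕ) (ω : Ω) : ℝ :=
  (∑ i ∈ range N, X (J i ω) ω) / N

omit [IsProbabilityMeasure μ] in
lemma memLp_sampleMean {p : ENNReal} (hX : ∀ j, MemLp (X j) p μ) :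
    MemLp (sampleMean X N) p μ := by
  unfold sampleMean
  simpa only [div_eq_mul_inv] using (memLp_finsetSum (range N) fun j _ ↦ hX j).mul_const _

lemma memLp_resampleMean {p : ENNReal} (hX : ∀ j, MemLp (X j) p μ) (hN : N ≠ 0)
    (hJ : ∀ i, Measurable (J i)) (hunif : ∀ i, ∀ j < N, μ (J i ⁻¹' {j}) = (N : ENNReal)⁻¹) :
    MemLp (resampleMean X J N) p μ := by
  unfold resampleMean
  simpa only [div_eq_mul_inv] using (memLp_finsetSum (range N) fun i _ ↦
    memLp_eval_of_uniform hX hN (hJ i) (hunif i)).mul_const _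

theorem integral_sq_resampleMean_sub_sampleMean (hm : m ≤ mΩ) (hXm : ∀ j, Measurable[m] (X j))
    (hX : ∀ j, MemLp (X j) 2 μ) {a v : ℝ} (hmean : ∀ j, μ[X j] = a)
    (hvar : ∀ j, ∫ ω, (X j ω - a) ^ 2 ∂μ = v) (hXindep : Pairwise fun i j ↦ X i ⟂ᵢ[μ] X j)
    (hN : N ≠ 0) (hJ : ∀ i, Measurable (J i))
    (hunif : ∀ i, ∀ j < N, μ (J i ⁻¹' {j}) = (N : ENNReal)⁻¹)
    (hJindep : Pairwise fun i i' ↦ J i ⟂ᵢ[μ] J i')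
    (hJX : Indep m (⨆ i, MeasurableSpace.comap (J i) inferInstance) μ) :
    ∫ ω, (resampleMean X J N ω - sampleMean X N ω) ^ 2 ∂μ = v / N * (1 - 1 / N) := by
  have hN' : (N : ℝ) ≠ 0 := by exact_mod_cast hN
  set D : ℕ → Ω → ℝ := fun j ω ↦ X j ω - sampleMean X N ω with hD
  have hDm : ∀ j, Measurable[m] (D j) := fun j ↦
    (hXm j).sub ((Finset.measurable_sum _ fun k _ ↦ hXm k).div_const _)
  have hDL2 : ∀ j, MemLp (D j) 2 μ := fun j ↦ (hX j).sub (memLp_sampleMean hX)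
  have hDsum : ∀ ω, ∑ j ∈ range N, D j ω = 0 := fun ω ↦ by
    simp only [hD, sampleMean, sum_sub_distrib, sum_const, card_range, nsmul_eq_mul]
    field_simp
    ring
  have hcentre : ∀ ω, resampleMean X J N ω - sampleMean X N ω =
      (∑ i ∈ range N, D (J i ω) ω) / N := fun ω ↦ by
    simp only [hD, resampleMean, sum_sub_distrib, sum_const, card_range, nsmul_eq_mul]
    field_simp
  simp_rw [hcentre, div_pow]
  rw [integral_div, integral_sq_sum_eval_resample hm hDm hDL2 hDsum hN hJ hunif hJindep hJX,
    integral_sum_sq_sub_sampleMean hN hX hmean hvar hXindep, card_range]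
  field_simp

end Bootstrap

/-- Exact expectation of the traditional bootstrap estimator of the squared
standard error: `E(ŜE²_TB) = (σ²/N)(1 − 1/N)` for every `N ≥ 1` and `B ≥ 1`. The bootstrap
resample indices `I (b, i)` are i.i.d. uniform on `{0, …, N−1}` and independent of the data. -/
theorem stmt_2
    {Ω : Type*} [MeasureSpace Ω] [IsProbabilityMeasure (ℙ : Measure Ω)]
    (N B : ℕ) (hN : 1 ≤ N) (hB : 1 ≤ B)
    (X : ℕ → Ω → ℝ) (mu sigma : ℝ)
    (hXmeas : ∀ i, Measurable (X i))
    (hXindep : iIndepFun X ℙ)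
    (hXident : ∀ i, IdentDistrib (X i) (X 0) ℙ ℙ)
    (hXmom : MemLp (X 0) 2 ℙ)
    (hmean : 𝔼[X 0] = mu)
    (hvar : 𝔼[fun ω => (X 0 ω - mu) ^ 2] = sigma ^ 2)
    (I : ℕ × ℕ → Ω → ℕ)
    (hImeas : ∀ p, Measurable (I p))
    (hIindep : iIndepFun I ℙ)
    (hIunif : ∀ p : ℕ × ℕ, ∀ j < N, ℙ {ω | I p ω = j} = (N : ENNReal)⁻¹)
    (hIX : Indep (⨆ i, MeasurableSpace.comap (X i) inferInstance)
        (⨆ p, MeasurableSpace.comap (I p) inferInstance) ℙ) :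
    𝔼[fun ω =>
        (∑ b ∈ Finset.range B,
          ((∑ i ∈ Finset.range N, X (I (b, i) ω) ω) / (N : ℝ)
            - (∑ j ∈ Finset.range N, X j ω) / (N : ℝ)) ^ 2) / (B : ℝ)]
      = sigma ^ 2 / (N : ℝ) * (1 - 1 / (N : ℝ)) := by
  have hN0 : N ≠ 0 := by omega
  have hB0 : (B : ℝ) ≠ 0 := by exact_mod_cast (show B ≠ 0 by omega)
  have hX : ∀ j, MemLp (X j) 2 ℙ := fun j ↦ (hXident j).symm.memLp_snd hXmom
  have hboot : ∀ b, ∫ ω, (resampleMean X (fun i ↦ I (b, i)) N ω - sampleMean X N ω) ^ 2 =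
      sigma ^ 2 / N * (1 - 1 / N) := fun b ↦
    integral_sq_resampleMean_sub_sampleMean (iSup_le fun i ↦ (hXmeas i).comap_le)
      (fun j ↦ Measurable.of_comap_le (le_iSup (fun i ↦ MeasurableSpace.comap (X i) _) j)) hX
      (fun j ↦ (hXident j).integral_eq.trans hmean)
      (fun j ↦
        ((hXident j).comp ((measurable_id.sub_const mu).pow_const 2)).integral_eq.trans hvar)
      (fun i j hij ↦ hXindep.indepFun hij) hN0 (fun i ↦ hImeas _) (fun i ↦ hIunif _)
      (fun i i' hii' ↦ hIindep.indepFun fun h ↦ hii' (Prod.ext_iff.1 h).2)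
      (indep_of_indep_of_le_right hIX
        (iSup_le fun i ↦ le_iSup (fun p ↦ MeasurableSpace.comap (I p) _) (b, i)))
  have hint : ∀ b, Integrable
      (fun ω ↦ (resampleMean X (fun i ↦ I (b, i)) N ω - sampleMean X N ω) ^ 2) ℙ := fun b ↦
    ((memLp_resampleMean hX hN0 (fun i ↦ hImeas _) fun i ↦ hIunif _).sub
      (memLp_sampleMean hX)).integrable_sq
  change ∫ ω, (∑ b ∈ range B,
    (resampleMean X (fun i ↦ I (b, i)) N ω - sampleMean X N ω) ^ 2) / B = _
  rw [integral_div, integral_finsetSum _ fun b _ ↦ hint b,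
    sum_congr rfl fun b _ ↦ hboot b, sum_const, card_range, nsmul_eq_mul]
  field_simp
end

section
/- Let c₁, c₂, c₃, α₁, α₂, n, R be positive real numbers. If B = √(c₁·α₂·n/(c₂·α₁)) and C = α₁·n·R·B + α₂·n·R, then equality holds in the lower bound: (c₁/(RB) + c₂/(nR) + c₃/n²)·C = (√(c₁·α₁·n) + √(c₂·α₂))² + C·c₃/n². Consequently, for fixed n, among all positive B and R with α₁nRB + α₂nR = C, the objective c₁/(RB) + c₂/(nR) + c₃/n² is minimized at B* = √(c₁α₂n/(c₂α₁)). -/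
/-!
Write the cost as `C = x + y` with `x = α₁nRB` (resampling) and `y = α₂nR` (subsampling), so that
`c₁/(RB) + c₂/(nR) = p/x + q/y` with `p = c₁α₁n`, `q = c₂α₂`. By Cauchy–Schwarz,
`(p/x + q/y)(x + y) ≥ (√p + √q)²`, with equality exactly when `x : y = √p : √q`; the choice
`B = √(c₁α₂n/(c₂α₁))` realises this ratio. Hence at fixed `n` and budget `C` no other `(B', R')`
does better, and the `c₃/n²` term is a constant.
-/

theorem div_add_div_mul_add_sub_sq_sqrt_add_sqrt {p q x y : ℝ} (hp : 0 ≤ p) (hq : 0 ≤ q)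
    (hx : 0 < x) (hy : 0 < y) :
    (p / x + q / y) * (x + y) - (√p + √q) ^ 2 = (y * √p - x * √q) ^ 2 / (x * y) := by
  field_simp
  linear_combination (-(y ^ 2) - x * y) * Real.sq_sqrt hp + (-(x ^ 2) - x * y) * Real.sq_sqrt hq

theorem sq_sqrt_add_sqrt_le_div_add_div_mul_add {p q x y : ℝ} (hp : 0 ≤ p) (hq : 0 ≤ q)
    (hx : 0 < x) (hy : 0 < y) :
    (√p + √q) ^ 2 ≤ (p / x + q / y) * (x + y) := by
  have hgap := div_add_div_mul_add_sub_sq_sqrt_add_sqrt hp hq hx hy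
  have : 0 ≤ (y * √p - x * √q) ^ 2 / (x * y) := by positivity
  linarith

theorem div_add_div_mul_add_eq_sq_sqrt_add_sqrt {p q x y : ℝ} (hp : 0 ≤ p) (hq : 0 ≤ q)
    (hx : 0 < x) (hy : 0 < y) (hratio : x * √q = y * √p) :
    (p / x + q / y) * (x + y) = (√p + √q) ^ 2 := by
  have hgap := div_add_div_mul_add_sub_sq_sqrt_add_sqrt hp hq hx hy
  rw [hratio, sub_self, zero_pow two_ne_zero, zero_div] at hgap
  linarith

theorem mul_sqrt_div_mul_sqrt_eq {c1 c2 a1 a2 n : ℝ} (hc1 : 0 < c1) (hc2 : 0 < c2)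
    (ha1 : 0 < a1) (ha2 : 0 < a2) (hn : 0 < n) :
    a1 * √(c1 * a2 * n / (c2 * a1)) * √(c2 * a2) = a2 * √(c1 * a1 * n) := by
  refine (pow_left_inj₀ (by positivity) (by positivity) two_ne_zero).mp ?_
  rw [mul_pow, mul_pow, mul_pow, Real.sq_sqrt (by positivity), Real.sq_sqrt (by positivity),
    Real.sq_sqrt (by positivity)]
  field_simp

theorem stmt_18_general (c1 c2 c3 a1 a2 n R B C : ℝ)
    (hc1 : 0 < c1) (hc2 : 0 < c2)
    (ha1 : 0 < a1) (ha2 : 0 < a2) (hn : 0 < n) (hR : 0 < R)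
    (hB : B = Real.sqrt (c1 * a2 * n / (c2 * a1)))
    (hC : C = a1 * n * R * B + a2 * n * R) :
    (c1 / (R * B) + c2 / (n * R) + c3 / n ^ 2) * C
        = (Real.sqrt (c1 * a1 * n) + Real.sqrt (c2 * a2)) ^ 2 + C * c3 / n ^ 2
      ∧ ∀ B' R' : ℝ, 0 < B' → 0 < R' → a1 * n * R' * B' + a2 * n * R' = C →
          c1 / (R * B) + c2 / (n * R) + c3 / n ^ 2
            ≤ c1 / (R' * B') + c2 / (n * R') + c3 / n ^ 2 := by
  have hBpos : 0 < B := hB ▸ Real.sqrt_pos.mpr (by positivity)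
  have hCpos : 0 < C := hC ▸ by positivity
  have hsplit : ∀ B' R', 0 < B' → 0 < R' → c1 / (R' * B') + c2 / (n * R')
      = c1 * a1 * n / (a1 * n * R' * B') + c2 * a2 / (a2 * n * R') := by
    intro B' R' hB' hR'
    field_simp
  have hoptimal : (c1 / (R * B) + c2 / (n * R)) * C = (√(c1 * a1 * n) + √(c2 * a2)) ^ 2 := by
    rw [hsplit B R hBpos hR, hC]
    refine div_add_div_mul_add_eq_sq_sqrt_add_sqrt (by positivity) (by positivity)
      (by positivity) (by positivity) ?_
    rw [hB]
    linear_combination n * R * mul_sqrt_div_mul_sqrt_eq hc1 hc2 ha1 ha2 hn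
  refine ⟨by linear_combination hoptimal, fun B' R' hB' hR' hbudget => ?_⟩
  have hlower : (√(c1 * a1 * n) + √(c2 * a2)) ^ 2 ≤ (c1 / (R' * B') + c2 / (n * R')) * C := by
    rw [hsplit B' R' hB' hR', ← hbudget]
    exact sq_sqrt_add_sqrt_le_div_add_div_mul_add (by positivity) (by positivity)
      (by positivity) (by positivity)
  have := le_of_mul_le_mul_right (hoptimal ▸ hlower) hCpos
  linarith

/-- For positive reals `c₁, c₂, c₃, α₁, α₂, n, R`, taking
`B = √(c₁α₂n/(c₂α₁))` and `C = α₁nRB + α₂nR`, equality holds in the Cauchy–Schwarz lower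
bound, and consequently, for fixed `n`, among all positive `B', R'` with
`α₁nR'B' + α₂nR' = C`, the objective `c₁/(RB) + c₂/(nR) + c₃/n²` is minimized at
`B* = √(c₁α₂n/(c₂α₁))`. -/
theorem stmt_18 (c1 c2 c3 a1 a2 n R B C : ℝ)
    (hc1 : 0 < c1) (hc2 : 0 < c2) (hc3 : 0 < c3)
    (ha1 : 0 < a1) (ha2 : 0 < a2) (hn : 0 < n) (hR : 0 < R)
    (hB : B = Real.sqrt (c1 * a2 * n / (c2 * a1)))
    (hC : C = a1 * n * R * B + a2 * n * R) :
    (c1 / (R * B) + c2 / (n * R) + c3 / n ^ 2) * C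
        = (Real.sqrt (c1 * a1 * n) + Real.sqrt (c2 * a2)) ^ 2 + C * c3 / n ^ 2
      ∧ ∀ B' R' : ℝ, 0 < B' → 0 < R' → a1 * n * R' * B' + a2 * n * R' = C →
          c1 / (R * B) + c2 / (n * R) + c3 / n ^ 2
            ≤ c1 / (R' * B') + c2 / (n * R') + c3 / n ^ 2 :=
  stmt_18_general c1 c2 c3 a1 a2 n R B C hc1 hc2 ha1 ha2 hn hR hB hC
end
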